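/- arXiv:2412.13315 — 4 statements merged into one kernel-verified Lean document; each statement's English description precedes it below -/
import Mathlib

section
/- Let C = C(x,r) and C̄ = C(x̄,r̄) be spheres in ℝⁿ with x ≠ x̄ and r, r̄ ∈ [1,2], and let 0 < δ < 1/2. Then the intersection of the δ-neighbourhoods C^δ ∩ C̄^δ is contained in a neighbourhood of thickness O(δ/|x−x̄|) of the affine hyperplane {y : ⟨(x̄−x)/|x̄−x|, y⟩ = (r² − r̄² − (|x|² − |x̄|²))/(2|x−x̄|)}. Explicitly: there is an absolute constant K > 0 such that every y ∈ C^δ ∩ C̄^δ satisfies |⟨(x̄−x)/|x̄−x|, y⟩ − (r² − r̄² − (|x|² − |x̄|²))/(2|x−x̄|)| ≤ K·δ/|x−x̄|. -/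
open EuclideanSpace Metric Set
open scoped RealInnerProductSpace

/-- There is an absolute constant `K > 0` such that for spheres `C(x,r)`, `C(x',r')` in ℝⁿ with
`x ≠ x'`, radii in `[1,2]` and `0 < δ < 1/2`, every point `y` in the intersection of the
`δ`-neighbourhoods of the two spheres satisfies
`|⟪(x'−x)/‖x'−x‖, y⟫ − (r² − r'² − (‖x‖² − ‖x'‖²))/(2‖x−x'‖)| ≤ K δ/‖x−x'‖`. -/
theorem stmt_1 :
    ∃ K > (0 : ℝ), ∀ (n : ℕ) (x x' : EuclideanSpace ℝ (Fin n)) (r r' δ : ℝ),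
      x ≠ x' → r ∈ Set.Icc (1 : ℝ) 2 → r' ∈ Set.Icc (1 : ℝ) 2 → 0 < δ → δ < 1 / 2 →
      ∀ y : EuclideanSpace ℝ (Fin n), |‖y - x‖ - r| < δ → |‖y - x'‖ - r'| < δ →
        |⟪‖x' - x‖⁻¹ • (x' - x), y⟫ -
            (r ^ 2 - r' ^ 2 - (‖x‖ ^ 2 - ‖x'‖ ^ 2)) / (2 * ‖x - x'‖)| ≤ K * δ / ‖x - x'‖ := by
  refine ⟨12, by norm_num, ?_⟩
  intro n x x' r r' δ hxx hr hr' hδ hδ2 y h1 h2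
  have hd : (0:ℝ) < ‖x - x'‖ := by
    rw [norm_pos_iff, sub_ne_zero]; exact hxx
  have hd' : ‖x' - x‖ = ‖x - x'‖ := norm_sub_rev _ _
  have key : ⟪‖x' - x‖⁻¹ • (x' - x), y⟫ =
      (‖y - x‖ ^ 2 - ‖y - x'‖ ^ 2 - (‖x‖ ^ 2 - ‖x'‖ ^ 2)) / (2 * ‖x - x'‖) := by
    rw [real_inner_smul_left, hd']
    have e1 : ‖y - x‖ ^ 2 = ‖y‖^2 - 2*⟪y,x⟫ + ‖x‖^2 := norm_sub_sq_real y x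
    have e2 : ‖y - x'‖ ^ 2 = ‖y‖^2 - 2*⟪y,x'⟫ + ‖x'‖^2 := norm_sub_sq_real y x'
    have e3 : ⟪x' - x, y⟫ = ⟪y,x'⟫ - ⟪y,x⟫ := by
      rw [inner_sub_left, real_inner_comm x' y, real_inner_comm x y]
    rw [e1, e2, e3]
    field_simp
    ring
  rw [key, div_sub_div_same, abs_div]
  have hA : |‖y - x‖ ^ 2 - r ^ 2| ≤ 5 * δ := by
    have he : ‖y - x‖ ^ 2 - r ^ 2 = (‖y - x‖ - r) * (‖y - x‖ + r) := by ring
    rw [he, abs_mul]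
    have hb : |‖y - x‖ + r| ≤ 5 := by
      have h := abs_lt.1 h1
      have hn := norm_nonneg (y - x)
      rw [abs_le]
      constructor <;> nlinarith [hr.1, hr.2, hδ2]
    nlinarith [abs_nonneg (‖y - x‖ - r), h1.le, abs_nonneg (‖y - x‖ + r)]
  have hB : |‖y - x'‖ ^ 2 - r' ^ 2| ≤ 5 * δ := by
    have he : ‖y - x'‖ ^ 2 - r' ^ 2 = (‖y - x'‖ - r') * (‖y - x'‖ + r') := by ring
    rw [he, abs_mul]
    have hb : |‖y - x'‖ + r'| ≤ 5 := by
      have h := abs_lt.1 h2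
      have hn := norm_nonneg (y - x')
      rw [abs_le]
      constructor <;> nlinarith [hr'.1, hr'.2, hδ2]
    nlinarith [abs_nonneg (‖y - x'‖ - r'), h2.le, abs_nonneg (‖y - x'‖ + r')]
  have hnum : |‖y - x‖ ^ 2 - ‖y - x'‖ ^ 2 - (‖x‖ ^ 2 - ‖x'‖ ^ 2) -
      (r ^ 2 - r' ^ 2 - (‖x‖ ^ 2 - ‖x'‖ ^ 2))| ≤ 10 * δ := by
    have he : ‖y - x‖ ^ 2 - ‖y - x'‖ ^ 2 - (‖x‖ ^ 2 - ‖x'‖ ^ 2) -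
        (r ^ 2 - r' ^ 2 - (‖x‖ ^ 2 - ‖x'‖ ^ 2)) =
        (‖y - x‖ ^ 2 - r ^ 2) - (‖y - x'‖ ^ 2 - r' ^ 2) := by ring
    rw [he]
    calc _ ≤ |‖y - x‖ ^ 2 - r ^ 2| + |‖y - x'‖ ^ 2 - r' ^ 2| := abs_sub _ _
      _ ≤ 10 * δ := by linarith
  have hden : |2 * ‖x - x'‖| = 2 * ‖x - x'‖ := abs_of_pos (by positivity)
  rw [hden, div_le_div_iff₀ (by positivity) hd]
  nlinarith [hnum, hd, hδ, abs_nonneg (‖y - x‖ ^ 2 - ‖y - x'‖ ^ 2 - (‖x‖ ^ 2 - ‖x'‖ ^ 2) -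
      (r ^ 2 - r' ^ 2 - (‖x‖ ^ 2 - ‖x'‖ ^ 2)))]
end

section
/- Let E ⊆ ℝ^d be an m-dimensional linear subspace with 1 ≤ m ≤ d−1. For all t > 0 and 0 < θ < 1/2, the Lebesgue measure of the set {x ∈ ℝ^d : t/2 ≤ |x| ≤ t and θ/2 ≤ |proj_E(x/|x|)| ≤ θ} is at most C_d · θ^m · t^d for some constant C_d depending only on d. -/
/-!
If `‖proj_E (x / ‖x‖)‖ ≤ θ` and `‖x‖ ≤ t`, then `‖proj_E x‖ ≤ tθ`. In an orthonormal basis of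
`ℝ^d` made of bases of `E` and `Eᗮ`, such an `x` lies in the box with half-sides `tθ` along the
`m` directions of `E` and `t` along the `d - m` directions of `Eᗮ`, whose volume is
`(2tθ)^m (2t)^(d-m) = 2^d θ^m t^d`.
-/

open MeasureTheory
open scoped RealInnerProductSpace

section

variable {F : Type*} [NormedAddCommGroup F] [InnerProductSpace ℝ F] [FiniteDimensional ℝ F]

noncomputable def Submodule.orthonormalBasisSumOrthogonal (K : Submodule ℝ F) :
    OrthonormalBasis (Fin (Module.finrank ℝ K) ⊕ Fin (Module.finrank ℝ Kᗮ)) ℝ F :=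
  ((stdOrthonormalBasis ℝ K).prod (stdOrthonormalBasis ℝ Kᗮ)).map K.orthogonalDecomposition.symm

theorem Submodule.orthonormalBasisSumOrthogonal_inl (K : Submodule ℝ F)
    (i : Fin (Module.finrank ℝ K)) :
    K.orthonormalBasisSumOrthogonal (Sum.inl i) = stdOrthonormalBasis ℝ K i := by
  simp [orthonormalBasisSumOrthogonal]

variable [MeasurableSpace F] [BorelSpace F]

theorem OrthonormalBasis.volume_setOf_abs_inner_le {ι : Type*} [Fintype ι]
    (B : OrthonormalBasis ι ℝ F) (r : ι → ℝ) :
    volume {x : F | ∀ i, |⟪B i, x⟫| ≤ r i} = ∏ i, ENNReal.ofReal (2 * r i) := by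
  have hbox : {x : F | ∀ i, |⟪B i, x⟫| ≤ r i} =
      B.repr ⁻¹' (WithLp.ofLp ⁻¹' Set.univ.pi fun i => Set.Icc (-r i) (r i)) := by
    ext x
    simp only [Set.mem_ofPred_eq, Set.mem_preimage, Set.mem_univ_pi, Set.mem_Icc, abs_le,
      B.repr_apply_apply]
  have hIcc : ∀ i, volume (Set.Icc (-r i) (r i)) = ENNReal.ofReal (2 * r i) := fun i => by
    rw [Real.volume_Icc, sub_neg_eq_add, two_mul]
  have hmeas : MeasurableSet (Set.univ.pi fun i => Set.Icc (-r i) (r i)) :=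
    MeasurableSet.univ_pi fun _ => measurableSet_Icc
  rw [hbox, B.measurePreserving_repr.measure_preimage
      (hmeas.preimage (WithLp.measurable_ofLp 2 _)).nullMeasurableSet,
    (PiLp.volume_preserving_ofLp ι).measure_preimage hmeas.nullMeasurableSet, volume_pi_pi]
  simp_rw [hIcc]

theorem Submodule.volume_setOf_norm_orthogonalProjectionOnto_le_and_norm_le
    (K : Submodule ℝ F) {a b : ℝ} (ha : 0 ≤ a) (hb : 0 ≤ b) :
    volume {x : F | ‖K.orthogonalProjectionOnto x‖ ≤ a ∧ ‖x‖ ≤ b} ≤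
      ENNReal.ofReal ((2 * a) ^ Module.finrank ℝ K * (2 * b) ^ Module.finrank ℝ Kᗮ) := by
  set B := K.orthonormalBasisSumOrthogonal
  let r : Fin (Module.finrank ℝ K) ⊕ Fin (Module.finrank ℝ Kᗮ) → ℝ :=
    Sum.elim (fun _ => a) fun _ => b
  have hsub : {x : F | ‖K.orthogonalProjectionOnto x‖ ≤ a ∧ ‖x‖ ≤ b} ⊆
      {x | ∀ i, |⟪B i, x⟫| ≤ r i} := by
    rintro x ⟨hPx, hx⟩ (i | j)
    · have hproj : ⟪B (Sum.inl i), x⟫ =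
          ⟪stdOrthonormalBasis ℝ K i, K.orthogonalProjectionOnto x⟫ := by
        rw [K.orthonormalBasisSumOrthogonal_inl, real_inner_comm,
          ← K.inner_orthogonalProjectionOnto_eq_of_mem_right, real_inner_comm]
      calc |⟪B (Sum.inl i), x⟫| ≤ ‖K.orthogonalProjectionOnto x‖ := by
            simpa [hproj] using abs_real_inner_le_norm (stdOrthonormalBasis ℝ K i)
              (K.orthogonalProjectionOnto x)
        _ ≤ a := hPx
    · calc |⟪B (Sum.inr j), x⟫| ≤ ‖x‖ := by
            simpa using abs_real_inner_le_norm (B (Sum.inr j)) x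
        _ ≤ b := hx
  calc volume {x : F | ‖K.orthogonalProjectionOnto x‖ ≤ a ∧ ‖x‖ ≤ b}
      ≤ volume {x | ∀ i, |⟪B i, x⟫| ≤ r i} := measure_mono hsub
    _ = ENNReal.ofReal ((2 * a) ^ Module.finrank ℝ K * (2 * b) ^ Module.finrank ℝ Kᗮ) := by
      rw [B.volume_setOf_abs_inner_le, Fintype.prod_sum_type]
      simp only [r, Sum.elim_inl, Sum.elim_inr, Finset.prod_const, Finset.card_univ,
        Fintype.card_fin]
      rw [← ENNReal.ofReal_pow (by positivity), ← ENNReal.ofReal_pow (by positivity),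
        ← ENNReal.ofReal_mul (by positivity)]

end

theorem norm_map_eq_norm_mul_norm_map_inv_norm_smul {E G 𝓕 : Type*}
    [NormedAddCommGroup E] [NormedSpace ℝ E] [NormedAddCommGroup G] [NormedSpace ℝ G]
    [FunLike 𝓕 E G] [LinearMapClass 𝓕 ℝ E G] (f : 𝓕) (x : E) :
    ‖f x‖ = ‖x‖ * ‖f (‖x‖⁻¹ • x)‖ := by
  rcases eq_or_ne x 0 with rfl | hx
  · simp
  · rw [map_smul, norm_smul, norm_inv, norm_norm, mul_inv_cancel_left₀ (norm_ne_zero_iff.mpr hx)]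

/-- For every dimension `d` there is a constant `C > 0` such that for every `m`-dimensional
subspace `E ⊆ ℝ^d` with `1 ≤ m ≤ d-1`, all `t > 0` and `0 < θ < 1/2`, the Lebesgue measure of
`{x : t/2 ≤ |x| ≤ t, θ/2 ≤ |proj_E (x/|x|)| ≤ θ}` is at most `C θ^m t^d`. -/
theorem stmt_3 (d : ℕ) :
    ∃ C > (0 : ℝ), ∀ (E : Submodule ℝ (EuclideanSpace ℝ (Fin d))) (m : ℕ),
      Module.finrank ℝ E = m → 1 ≤ m → m ≤ d - 1 →
      ∀ (t θ : ℝ), 0 < t → 0 < θ → θ < 1 / 2 →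
        volume {x : EuclideanSpace ℝ (Fin d) |
            t / 2 ≤ ‖x‖ ∧ ‖x‖ ≤ t ∧
            θ / 2 ≤ ‖(E.orthogonalProjection (‖x‖⁻¹ • x) : EuclideanSpace ℝ (Fin d))‖ ∧
            ‖(E.orthogonalProjection (‖x‖⁻¹ • x) : EuclideanSpace ℝ (Fin d))‖ ≤ θ} ≤
          ENNReal.ofReal (C * θ ^ m * t ^ d) := by
  refine ⟨2 ^ d, by positivity, fun E m hEm _ _ t θ ht hθ _ => ?_⟩
  have hconst : (2 * (t * θ)) ^ m * (2 * t) ^ Module.finrank ℝ Eᗮ = 2 ^ d * θ ^ m * t ^ d := by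
    obtain ⟨k, hk, hdim⟩ : ∃ k, Module.finrank ℝ Eᗮ = k ∧ m + k = d :=
      ⟨_, rfl, by rw [← hEm, E.finrank_add_finrank_orthogonal, finrank_euclideanSpace_fin]⟩
    rw [hk, ← hdim]
    ring
  calc _ ≤ volume {x | ‖E.orthogonalProjectionOnto x‖ ≤ t * θ ∧ ‖x‖ ≤ t} := by
        refine measure_mono fun x ⟨_, hxt, _, hxθ⟩ => ⟨?_, hxt⟩
        rw [norm_map_eq_norm_mul_norm_map_inv_norm_smul E.orthogonalProjectionOnto x]
        exact mul_le_mul hxt hxθ (norm_nonneg _) ht.le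
    _ ≤ _ := E.volume_setOf_norm_orthogonalProjectionOnto_le_and_norm_le (by positivity) ht.le
    _ = _ := by rw [hEm, hconst]
end

section
/- Let n ≥ 2 and let e₂, …, e_m ∈ ℝ^{n−1} (2 ≤ m ≤ n) be unit vectors, and for 2 ≤ j ≤ m let Π̃_j^δ ⊆ ℝ^{n−1} be a slab of thickness w_j (i.e. the set of points at distance ≤ w_j/2 from an affine hyperplane with normal e_j). Set R = ⋂_{j=2}^m Π̃_j^δ ∩ [−10,10]^{n−1}. If the vectors e₂,…,e_m are linearly independent, then |R| ≤ C_n · |e₂ ∧ ⋯ ∧ e_m|^{−1} · ∏_{j=2}^m w_j, where |e₂ ∧ ⋯ ∧ e_m| is the square root of the Gram determinant. -/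
open MeasureTheory EuclideanSpace Metric Set Finset
open scoped RealInnerProductSpace

/-!
Complete the normals `e j` by an orthonormal basis `b` of the orthogonal complement of their
span. The cube lies in the ball of radius `10 √(n-1)`, so `R` lies in the set where every
`⟪e j, x⟫` lies in its slab interval and every `|⟪b i, x⟫| ≤ 10 √(n-1)`. That set is the preimage
of a box under the linear map `x ↦ (⟪F a, x⟫)ₐ`, `F = (e, b)`, whose determinant squared is the
Gram determinant of `F`; by orthogonality this is the Gram determinant of `e`.
-/

open Matrix Module

variable {E : Type*} [NormedAddCommGroup E] [InnerProductSpace ℝ E]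

theorem Matrix.det_gram_sum_elim_of_orthonormal {ι κ : Type*} [Fintype ι] [Fintype κ]
    [DecidableEq ι] [DecidableEq κ] (e : ι → E) {b : κ → E} (hb : Orthonormal ℝ b)
    (heb : ∀ i j, ⟪e i, b j⟫ = 0) :
    (gram ℝ (Sum.elim e b)).det = (gram ℝ e).det := by
  have hblocks : gram ℝ (Sum.elim e b) = fromBlocks (gram ℝ e) 0 0 1 := by
    rw [← gram_eq_one_iff_orthonormal] at hb
    ext (i | i) (j | j) <;> simp [gram_apply, heb, real_inner_comm, ← hb]
  rw [hblocks, det_fromBlocks_zero₂₁, det_one, mul_one]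

theorem LinearIndependent.exists_orthonormal_orthogonal [FiniteDimensional ℝ E] {ι : Type*}
    [Fintype ι] {e : ι → E} (he : LinearIndependent ℝ e) :
    ∃ (r : ℕ) (b : Fin r → E), Fintype.card ι + r = finrank ℝ E ∧ Orthonormal ℝ b ∧
      ∀ i j, ⟪e i, b j⟫ = 0 := by
  set U := Submodule.span ℝ (range e)
  let b := stdOrthonormalBasis ℝ Uᗮ
  refine ⟨_, fun j => b j, ?_, b.orthonormal.comp_linearIsometry Uᗮ.subtypeₗᵢ,
    fun i j => ?_⟩
  · rw [← finrank_span_eq_card he]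
    exact U.finrank_add_finrank_orthogonal
  · exact (Submodule.mem_orthogonal U _).1 (b j).2 _ (Submodule.subset_span (mem_range_self i))

theorem EuclideanSpace.norm_le_sqrt_card_mul {ι : Type*} [Fintype ι] {x : EuclideanSpace ℝ ι}
    {a : ℝ} (ha : 0 ≤ a) (hx : ∀ i, |x i| ≤ a) : ‖x‖ ≤ √(Fintype.card ι) * a := by
  rw [EuclideanSpace.norm_eq, ← Real.sqrt_sq ha, ← Real.sqrt_mul (by positivity)]
  gcongr
  calc ∑ i, ‖x i‖ ^ 2 ≤ ∑ _i : ι, a ^ 2 := by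
        gcongr with i
        exact (Real.norm_eq_abs _).trans_le (hx i)
    _ = _ := by simp

theorem OrthonormalBasis.volume_setOf_forall_repr_mem [FiniteDimensional ℝ E] [MeasurableSpace E]
    [BorelSpace E] {ι : Type*} [Fintype ι] (u : OrthonormalBasis ι ℝ E) {I : ι → Set ℝ}
    (hI : ∀ a, MeasurableSet (I a)) :
    volume {x : E | ∀ a, u.repr x a ∈ I a} = ∏ a, volume (I a) := by
  have : {x : E | ∀ a, u.repr x a ∈ I a} = u.repr ⁻¹' (WithLp.ofLp ⁻¹' univ.pi I) := by
    ext; simp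
  have hbox := MeasurableSet.univ_pi hI
  have hofLp := PiLp.volume_preserving_ofLp ι
  rw [this, u.measurePreserving_repr.measure_preimage
    (hbox.preimage hofLp.measurable).nullMeasurableSet,
    hofLp.measure_preimage hbox.nullMeasurableSet, volume_pi_pi]

theorem OrthonormalBasis.det_sq_eq_det_gram {ι : Type*} [Fintype ι] [DecidableEq ι]
    (u : OrthonormalBasis ι ℝ E) {F : ι → E} {T : E →ₗ[ℝ] E}
    (hT : ∀ x a, u.repr (T x) a = ⟪F a, x⟫) : T.det ^ 2 = (gram ℝ F).det := by
  have hmat : LinearMap.toMatrix u.toBasis u.toBasis T = (of fun i j => u.repr (F j) i)ᴴ := by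
    ext i j
    simp [LinearMap.toMatrix_apply, hT, u.repr_apply_apply, real_inner_comm]
  have hdet : T.det = (of fun i j => u.repr (F j) i).det := by
    rw [← LinearMap.det_toMatrix u.toBasis, hmat, det_conjTranspose, star_trivial]
  rw [gram_eq_conjTranspose_mul u F, det_mul, det_conjTranspose, star_trivial, ← hdet, sq]

theorem volume_setOf_forall_inner_mem [FiniteDimensional ℝ E] [MeasurableSpace E]
    [BorelSpace E] {ι : Type*} [Fintype ι] [DecidableEq ι] (hcard : Fintype.card ι = finrank ℝ E)
    {F : ι → E} (hF : LinearIndependent ℝ F) {I : ι → Set ℝ} (hI : ∀ a, MeasurableSet (I a)) :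
    volume {x : E | ∀ a, ⟪F a, x⟫ ∈ I a} =
      ENNReal.ofReal (√(gram ℝ F).det)⁻¹ * ∏ a, volume (I a) := by
  let u := (stdOrthonormalBasis ℝ E).reindex (Fintype.equivFinOfCardEq hcard).symm
  let T : E →ₗ[ℝ] E := ∑ a, (innerₛₗ ℝ (F a)).smulRight (u a)
  have hT : ∀ x a, u.repr (T x) a = ⟪F a, x⟫ := by
    intro x a
    simp [T, Pi.single_apply]
  have hdet := u.det_sq_eq_det_gram hT
  have hT0 : T.det ≠ 0 := by
    rw [← pow_ne_zero_iff two_ne_zero, hdet]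
    exact det_gram_ne_zero_iff_linearIndependent.2 hF
  have hset : {x : E | ∀ a, ⟪F a, x⟫ ∈ I a} = T ⁻¹' {y | ∀ a, u.repr y a ∈ I a} := by
    ext; simp [hT]
  rw [hset, Measure.addHaar_preimage_linearMap _ hT0, u.volume_setOf_forall_repr_mem hI, ← hdet,
    Real.sqrt_sq_eq_abs, abs_inv]

theorem volume_setOf_closedBall_slabs_le [FiniteDimensional ℝ E] [MeasurableSpace E]
    [BorelSpace E] {ι : Type*} [Fintype ι] [DecidableEq ι] {e : ι → E}
    (he : LinearIndependent ℝ e) {w : ι → ℝ} (hw : ∀ j, 0 ≤ w j) (c : ι → ℝ) {ρ : ℝ}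
    (hρ : 0 ≤ ρ) :
    volume {x ∈ closedBall (0 : E) ρ | ∀ j, |⟪e j, x⟫ - c j| ≤ w j / 2} ≤
      ENNReal.ofReal
        ((√(gram ℝ e).det)⁻¹ * (∏ j, w j) * (2 * ρ) ^ (finrank ℝ E - Fintype.card ι)) := by
  obtain ⟨r, b, hkr, hb, heb⟩ := he.exists_orthonormal_orthogonal
  rw [show finrank ℝ E - Fintype.card ι = r by omega]
  let I : ι ⊕ Fin r → Set ℝ :=
    Sum.elim (fun j => Icc (c j - w j / 2) (c j + w j / 2)) (fun _ => Icc (-ρ) ρ)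
  have hsub : {x ∈ closedBall (0 : E) ρ | ∀ j, |⟪e j, x⟫ - c j| ≤ w j / 2} ⊆
      {x | ∀ a, ⟪Sum.elim e b a, x⟫ ∈ I a} := by
    rintro x ⟨hx, hxe⟩ (j | j)
    · exact mem_Icc_iff_abs_le.1 ((abs_sub_comm _ _).trans_le (hxe j))
    · have : |⟪b j, x⟫| ≤ ρ := calc
        _ ≤ ‖b j‖ * ‖x‖ := abs_real_inner_le_norm _ _
        _ ≤ ρ := by rwa [hb.1 j, one_mul, ← mem_closedBall_zero_iff]
      exact abs_le.1 this
  have hF : LinearIndependent ℝ (Sum.elim e b) := by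
    rw [← det_gram_ne_zero_iff_linearIndependent, det_gram_sum_elim_of_orthonormal e hb heb]
    exact det_gram_ne_zero_iff_linearIndependent.2 he
  have hvol := volume_setOf_forall_inner_mem (by simpa using hkr) hF
    (I := I) (by rintro (j | j) <;> exact measurableSet_Icc)
  refine (measure_mono hsub).trans_eq (hvol.trans ?_)
  rw [det_gram_sum_elim_of_orthonormal e hb heb, Fintype.prod_sum_type,
    ENNReal.ofReal_mul' (by positivity), ENNReal.ofReal_mul (by positivity),
    ENNReal.ofReal_prod_of_nonneg fun j _ => hw j,
    ENNReal.ofReal_pow (by positivity), mul_assoc]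
  simp only [I, Sum.elim_inl, Sum.elim_inr, Real.volume_Icc, prod_const, card_univ,
    Fintype.card_fin]
  ring_nf

/-- For every `n ≥ 2` there is a constant `C > 0` such that for any linearly independent unit
vectors `e 0, …, e (k-1)` in `ℝ^{n-1}` (with `1 ≤ k ≤ n-1`, corresponding to `e₂,…,e_m`,
`k = m-1`) and slabs `Π̃_j` of thickness `w j` with normal `e j`, the set
`R = ⋂_j Π̃_j ∩ [−10,10]^{n−1}` has Lebesgue measure at most
`C |e₂ ∧ ⋯ ∧ e_m|⁻¹ ∏_j w j`, where the wedge norm is the square root of the Gram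
determinant. -/
theorem stmt_8 (n : ℕ) (hn : 2 ≤ n) :
    ∃ C > (0 : ℝ), ∀ (k : ℕ), 1 ≤ k → k ≤ n - 1 →
      ∀ (e : Fin k → EuclideanSpace ℝ (Fin (n - 1))) (w c : Fin k → ℝ),
      (∀ j, ‖e j‖ = 1) → (∀ j, 0 ≤ w j) → LinearIndependent ℝ e →
      volume {x : EuclideanSpace ℝ (Fin (n - 1)) |
          (∀ i, |x i| ≤ 10) ∧ ∀ j, |⟪e j, x⟫ - c j| ≤ w j / 2} ≤
        ENNReal.ofReal
          (C * (Real.sqrt (Matrix.det (Matrix.of fun i j : Fin k => ⟪e i, e j⟫)))⁻¹ *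
            ∏ j, w j) := by
  refine ⟨(20 * √n) ^ n, by positivity, fun k _ _ e w c _ hw he => ?_⟩
  set ρ : ℝ := √(n - 1 : ℕ) * 10
  have hcube : {x : EuclideanSpace ℝ (Fin (n - 1)) |
      (∀ i, |x i| ≤ 10) ∧ ∀ j, |⟪e j, x⟫ - c j| ≤ w j / 2} ⊆
      {x ∈ closedBall 0 ρ | ∀ j, |⟪e j, x⟫ - c j| ≤ w j / 2} := fun x ⟨hx, hxe⟩ =>
    ⟨mem_closedBall_zero_iff.2 (by simpa using norm_le_sqrt_card_mul (by norm_num) hx), hxe⟩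
  refine (measure_mono hcube).trans
    ((volume_setOf_closedBall_slabs_le he hw c (by positivity)).trans (ENNReal.ofReal_le_ofReal ?_))
  have hpow : (2 * ρ) ^ (n - 1 - k) ≤ (20 * √n) ^ n := by
    have hd : (1 : ℝ) ≤ (n - 1 : ℕ) := by norm_cast; omega
    have : √(n - 1 : ℕ) ≤ √n := Real.sqrt_le_sqrt (by norm_cast; omega)
    refine (pow_le_pow_right₀ ?_ (by omega)).trans (pow_le_pow_left₀ (by positivity) ?_ n) <;>
      nlinarith [Real.one_le_sqrt.2 hd]
  simp only [finrank_euclideanSpace, Fintype.card_fin]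
  calc _ ≤ (√(gram ℝ e).det)⁻¹ * (∏ j, w j) * (20 * √n) ^ n := by
        gcongr
        exact mul_nonneg (by positivity) (prod_nonneg fun j _ => hw j)
    _ = (20 * √n) ^ n * (√(gram ℝ e).det)⁻¹ * ∏ j, w j := by ring
end

section
/- Let n ≥ 3. For spheres C₁, C₂, C₃ in ℝⁿ with radii in [1,2] and distinct, non-collinear centres, consider a point y ∈ C₁ ∩ C₂ ∩ C₃ at which the circles (spheres of codimension 2) C₁ ∩ C₂ and C₁ ∩ C₃ are tangent within C₁ (i.e. their tangent spaces at y inside the tangent space of C₁ coincide). If all three centres lie in the hyperplane ℝ^{n−1} × {0}, then the point of tangency y also lies in ℝ^{n−1} × {0}. -/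
open MeasureTheory EuclideanSpace Metric Set
open scoped RealInnerProductSpace

lemma aux_orth_pair {E : Type*} [NormedAddCommGroup E] [InnerProductSpace ℝ E]
    (u w : E) :
    ((Submodule.span ℝ ({u, w} : Set E))ᗮ : Set E) =
      {v : E | ⟪u, v⟫ = 0 ∧ ⟪w, v⟫ = 0} := by
  ext v
  simp only [SetLike.mem_coe, Submodule.mem_orthogonal, Set.mem_setOf_eq]
  constructor
  · intro h
    exact ⟨h u (Submodule.subset_span (by simp)), h w (Submodule.subset_span (by simp))⟩
  · rintro ⟨h1, h2⟩ z hz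
    induction hz using Submodule.span_induction with
    | mem x hx =>
      rcases hx with hx | hx
      · subst hx; exact h1
      · simp at hx; subst hx; exact h2
    | zero => simp
    | add a b _ _ ha hb => rw [inner_add_left, ha, hb, add_zero]
    | smul c a _ ha => rw [inner_smul_left, ha, mul_zero]

/-- Tangency points lie on the equator: let `n ≥ 3` and let `C₁, C₂, C₃` be spheres in `ℝⁿ`
with radii in `[1,2]`, distinct non-collinear centres lying in `ℝ^{n−1} × {0}`. If
`y ∈ C₁ ∩ C₂ ∩ C₃` is a point at which the tangent spaces inside `C₁` of the codimension-2
spheres `C₁ ∩ C₂` and `C₁ ∩ C₃` coincide (expressed as equality of the sets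
`{v : ⟪y−x₁,v⟫ = 0 ∧ ⟪x₂−x₁,v⟫ = 0}` and `{v : ⟪y−x₁,v⟫ = 0 ∧ ⟪x₃−x₁,v⟫ = 0}`), then the
last coordinate of `y` vanishes: `yₙ = 0`. -/
theorem stmt_18 (n : ℕ) (hn : 3 ≤ n)
    (x₁ x₂ x₃ : EuclideanSpace ℝ (Fin n)) (r₁ r₂ r₃ : ℝ)
    (hr₁ : r₁ ∈ Set.Icc (1 : ℝ) 2) (hr₂ : r₂ ∈ Set.Icc (1 : ℝ) 2)
    (hr₃ : r₃ ∈ Set.Icc (1 : ℝ) 2)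
    (h12 : x₁ ≠ x₂) (h13 : x₁ ≠ x₃) (h23 : x₂ ≠ x₃)
    (hncol : ¬ Collinear ℝ ({x₁, x₂, x₃} : Set (EuclideanSpace ℝ (Fin n))))
    (hflat₁ : x₁ ⟨n - 1, by omega⟩ = 0) (hflat₂ : x₂ ⟨n - 1, by omega⟩ = 0)
    (hflat₃ : x₃ ⟨n - 1, by omega⟩ = 0)
    (y : EuclideanSpace ℝ (Fin n))
    (hy₁ : ‖y - x₁‖ = r₁) (hy₂ : ‖y - x₂‖ = r₂) (hy₃ : ‖y - x₃‖ = r₃)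
    (htang : {v : EuclideanSpace ℝ (Fin n) | ⟪y - x₁, v⟫ = 0 ∧ ⟪x₂ - x₁, v⟫ = 0} =
      {v : EuclideanSpace ℝ (Fin n) | ⟪y - x₁, v⟫ = 0 ∧ ⟪x₃ - x₁, v⟫ = 0}) :
    y ⟨n - 1, by omega⟩ = 0 := by
  set K := Submodule.span ℝ ({y - x₁, x₂ - x₁} : Set (EuclideanSpace ℝ (Fin n)))
  set L := Submodule.span ℝ ({y - x₁, x₃ - x₁} : Set (EuclideanSpace ℝ (Fin n)))
  have horth : Kᗮ = Lᗮ := by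
    apply SetLike.coe_injective
    rw [aux_orth_pair, aux_orth_pair, htang]
  have hKL : K = L := by
    rw [← Submodule.orthogonal_orthogonal K, ← Submodule.orthogonal_orthogonal L, horth]
  have hmem : x₃ - x₁ ∈ K := by
    rw [hKL]
    exact Submodule.subset_span (by simp)
  rw [Submodule.mem_span_pair] at hmem
  obtain ⟨a, b, hab⟩ := hmem
  have ha : a ≠ 0 := by
    intro ha0
    apply hncol
    apply (collinear_iff_of_mem (Set.mem_insert x₁ _)).2
    refine ⟨x₂ - x₁, ?_⟩
    rintro p (rfl | rfl | rfl)
    · exact ⟨0, by simp⟩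
    · exact ⟨1, by simp⟩
    · refine ⟨b, ?_⟩
      rw [ha0, zero_smul, zero_add] at hab
      rw [vadd_eq_add, hab]; abel
  have hlast : (a • (y - x₁) + b • (x₂ - x₁)) ⟨n - 1, by omega⟩
      = (x₃ - x₁) ⟨n - 1, by omega⟩ := by rw [hab]
  have h1 : a * (y ⟨n - 1, by omega⟩ - x₁ ⟨n - 1, by omega⟩)
      + b * (x₂ ⟨n - 1, by omega⟩ - x₁ ⟨n - 1, by omega⟩)
      = x₃ ⟨n - 1, by omega⟩ - x₁ ⟨n - 1, by omega⟩ := by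
    simpa [PiLp.add_apply, PiLp.smul_apply, PiLp.sub_apply, smul_eq_mul] using hlast
  rw [hflat₁, hflat₂, hflat₃] at h1
  simp at h1
  rcases h1 with h | h
  · exact absurd h ha
  · exact h
end
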